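/- If D is an n×n Euclidean distance matrix of rank r with not all points equal, then D has exactly one positive eigenvalue, n−r zero eigenvalues, and r−1 negative eigenvalues. -/

import Mathlib

/-!
On the hyperplane `∑ vᵢ = 0` the quadratic form of a squared-distance matrix is
`vᵀ D v = -2 ‖∑ vᵢ xᵢ‖² ≤ 0`. A plane spanned by two eigenvectors with positive eigenvalues
would meet that hyperplane in a vector where the form is positive, so `D` has at most one positive
eigenvalue. It has at least one, because its trace (the sum of its eigenvalues) is zero while
`D ≠ 0`. The nonzero eigenvalues number `rank D`, so `rank D - 1` of them are negative.
-/

open Matrix Finset RealInnerProductSpace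

section SqDist

variable {ι E : Type*} [NormedAddCommGroup E]

def sqDistMatrix (x : ι → E) : Matrix ι ι ℝ := of fun i j => ‖x i - x j‖ ^ 2

theorem trace_sqDistMatrix [Fintype ι] (x : ι → E) : (sqDistMatrix x).trace = 0 := by
  simp [sqDistMatrix, trace]

theorem sqDistMatrix_ne_zero_iff (x : ι → E) : sqDistMatrix x ≠ 0 ↔ ∃ i j, x i ≠ x j := by
  simp [sqDistMatrix, ← Matrix.ext_iff, sub_eq_zero]

theorem dotProduct_sqDistMatrix_mulVec [Fintype ι] [InnerProductSpace ℝ E] {v : ι → ℝ}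
    (x : ι → E) (hv : ∑ i, v i = 0) :
    v ⬝ᵥ (sqDistMatrix x *ᵥ v) = -2 * ‖∑ i, v i • x i‖ ^ 2 := by
  set s := ∑ i, v i • x i
  set c := ∑ j, ‖x j‖ ^ 2 * v j
  have hrow : ∀ i, (sqDistMatrix x *ᵥ v) i = ‖x i‖ ^ 2 * ∑ j, v j - 2 * ⟪x i, s⟫ + c := by
    intro i
    simp only [sqDistMatrix, mulVec, dotProduct, of_apply, norm_sub_sq_real, s, c, inner_sum,
      real_inner_smul_right, mul_sum, add_mul, sub_mul, sum_add_distrib, sum_sub_distrib]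
    congr 2
    exact sum_congr rfl fun j _ => by ring
  calc v ⬝ᵥ (sqDistMatrix x *ᵥ v)
      = ∑ i, (v i * c - 2 * ⟪v i • x i, s⟫) := by
        refine sum_congr rfl fun i _ => ?_
        rw [hrow, hv, real_inner_smul_left]
        ring
    _ = (∑ i, v i) * c - 2 * ⟪s, s⟫ := by rw [sum_sub_distrib, ← sum_mul, ← mul_sum, ← sum_inner]
    _ = -2 * ‖s‖ ^ 2 := by rw [hv, real_inner_self_eq_norm_sq]; ring

end SqDist

namespace Matrix.IsHermitian

section RCLike

variable {𝕜 ι : Type*} [RCLike 𝕜] [Fintype ι] [DecidableEq ι] {A : Matrix ι ι 𝕜}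

theorem card_eigenvalues_eq_zero (hA : A.IsHermitian) :
    #{i | hA.eigenvalues i = 0} = Fintype.card ι - A.rank := by
  rw [hA.rank_eq_card_non_zero_eigs, Fintype.card_subtype, filter_not,
    card_sdiff_of_subset (filter_subset _ _), card_univ, Nat.sub_sub_self (card_le_univ _)]

theorem rank_eq_card_pos_add_card_neg (hA : A.IsHermitian) :
    A.rank = #{i | 0 < hA.eigenvalues i} + #{i | hA.eigenvalues i < 0} := by
  rw [hA.rank_eq_card_non_zero_eigs, Fintype.card_subtype, ← card_union_of_disjoint
    (disjoint_filter.mpr fun _ _ h => h.not_gt), ← filter_or]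
  simp only [ne_iff_lt_or_gt, or_comm]

theorem exists_pos_eigenvalue (hA : A.IsHermitian) (htr : A.trace = 0) (hA0 : A ≠ 0) :
    ∃ i, 0 < hA.eigenvalues i := by
  have hsum : ∑ i, hA.eigenvalues i = 0 := by
    exact_mod_cast hA.trace_eq_sum_eigenvalues.symm.trans htr
  by_contra! hle
  exact hA0 (hA.eigenvalues_eq_zero_iff.mp <| funext fun i =>
    (sum_eq_zero_iff_of_nonpos fun i _ => hle i).mp hsum i (mem_univ i))

end RCLike

section Real

variable {ι : Type*} [Fintype ι] [DecidableEq ι] {A : Matrix ι ι ℝ}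

theorem dotProduct_eigenvectorBasis (hA : A.IsHermitian) (i j : ι) :
    ⇑(hA.eigenvectorBasis i) ⬝ᵥ ⇑(hA.eigenvectorBasis j) = if i = j then 1 else 0 := by
  simpa [PiLp.inner_apply, dotProduct, mul_comm] using
    orthonormal_iff_ite.mp hA.eigenvectorBasis.orthonormal i j

theorem dotProduct_mulVec_eigenvectorBasis_add (hA : A.IsHermitian) {i j : ι} (hij : i ≠ j)
    (a b : ℝ) :
    (a • ⇑(hA.eigenvectorBasis i) + b • ⇑(hA.eigenvectorBasis j)) ⬝ᵥ
      (A *ᵥ (a • ⇑(hA.eigenvectorBasis i) + b • ⇑(hA.eigenvectorBasis j))) =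
      a ^ 2 * hA.eigenvalues i + b ^ 2 * hA.eigenvalues j := by
  simp only [mulVec_add, mulVec_smul, mulVec_eigenvectorBasis, add_dotProduct, dotProduct_add,
    smul_dotProduct, dotProduct_smul, dotProduct_eigenvectorBasis, if_neg hij, if_neg hij.symm,
    if_pos, smul_eq_mul]
  ring

theorem card_pos_eigenvalues_le_one (hA : A.IsHermitian) (c : ι → ℝ)
    (hneg : ∀ v, v ⬝ᵥ c = 0 → v ⬝ᵥ (A *ᵥ v) ≤ 0) : #{i | 0 < hA.eigenvalues i} ≤ 1 := by
  refine card_le_one.mpr fun i hi j hj => by_contra fun hij => ?_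
  rw [mem_filter_univ] at hi hj
  set u := ⇑(hA.eigenvectorBasis i)
  set w := ⇑(hA.eigenvectorBasis j)
  obtain ⟨a, b, hab, hc⟩ : ∃ a b : ℝ, (a ≠ 0 ∨ b ≠ 0) ∧ a * (u ⬝ᵥ c) + b * (w ⬝ᵥ c) = 0 := by
    by_cases h : w ⬝ᵥ c = 0
    · exact ⟨0, 1, by simp, by simp [h]⟩
    · exact ⟨w ⬝ᵥ c, -(u ⬝ᵥ c), .inl h, by ring⟩
  have hpos : 0 < a ^ 2 * hA.eigenvalues i + b ^ 2 * hA.eigenvalues j := by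
    rcases hab with ha | hb <;> positivity
  refine (hneg (a • u + b • w) ?_).not_gt ?_
  · rw [add_dotProduct, smul_dotProduct, smul_dotProduct, smul_eq_mul, smul_eq_mul, hc]
  · rwa [hA.dotProduct_mulVec_eigenvectorBasis_add hij]

end Real

end Matrix.IsHermitian

theorem edm_eigenvalue_signs (n d : ℕ)
    (x : Fin n → EuclideanSpace ℝ (Fin d))
    (D : Matrix (Fin n) (Fin n) ℝ)
    (hD : D = Matrix.of fun i j => ‖x i - x j‖ ^ 2)
    (hx : ∃ i j, x i ≠ x j)
    (hH : D.IsHermitian) :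
    (Finset.univ.filter fun i => 0 < hH.eigenvalues i).card = 1 ∧
    (Finset.univ.filter fun i => hH.eigenvalues i = 0).card = n - D.rank ∧
    (Finset.univ.filter fun i => hH.eigenvalues i < 0).card = D.rank - 1 := by
  replace hD : D = sqDistMatrix x := hD
  subst hD
  have hpos : #{i | 0 < hH.eigenvalues i} = 1 := by
    refine le_antisymm (hH.card_pos_eigenvalues_le_one 1 fun v hv => ?_) (card_pos.mpr ?_)
    · rw [dotProduct_sqDistMatrix_mulVec x ((dotProduct_one v).symm.trans hv)]
      exact mul_nonpos_of_nonpos_of_nonneg (by norm_num) (sq_nonneg _)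
    · obtain ⟨i, hi⟩ := hH.exists_pos_eigenvalue (trace_sqDistMatrix x)
        ((sqDistMatrix_ne_zero_iff x).mpr hx)
      exact ⟨i, (mem_filter_univ i).mpr hi⟩
  have hrank := hH.rank_eq_card_pos_add_card_neg
  refine ⟨hpos, by simpa using hH.card_eigenvalues_eq_zero, by omega⟩
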